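/- Let δ be a Young diagram of height < r and width strictly less than d − r + 1, where 0 < r ≤ d, and apply the staircase algorithm with parameter r to obtain δ_0 = δ, δ_1, …, δ_K with K = d − r + 1 and box counts s_k = |δ_k| − |δ|. Then s_K = d; the width of δ_k is < d − r + 1 for all k < K; and the width of δ_K equals d − r + 1. -/

import Mathlib

/-- `colHt f j` : height of the `j`-th column (`j ≥ 1`) of the Young diagram with
0-indexed row lengths `f`, i.e. the number of rows of length at least `j`. -/
noncomputable def colHt (f : ℕ → ℕ) (j : ℕ) : ℕ := sInf {i | f i < j}

/-- Add boxes to column `k` so that rows `0,…,t-1` reach length at least `k`,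
i.e. the `k`-th column reaches height `t`. -/
def addCol (f : ℕ → ℕ) (k t : ℕ) : ℕ → ℕ :=
  fun i => if i < t then max (f i) k else f i

/-- The staircase algorithm with parameter `r` applied to a Young diagram `f` of
height `< r`: stage 1 adds boxes to the first column until it reaches height `r`;
stage `k ≥ 2` adds boxes to the `k`-th column until its height is one more than the
height of the `(k-1)`-th column of the starting diagram. `staircase r f k` is `δ_k`. -/
noncomputable def staircase (r : ℕ) (f : ℕ → ℕ) : ℕ → ℕ → ℕ
  | 0 => f
  | k + 1 => addCol (staircase r f k) (k + 1) (if k = 0 then r else colHt f k + 1)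

/-!
Stage `k` raises row `i ≥ 1` to `k` exactly when row `i - 1` of `δ` already reached `k - 1`,
so in closed form `δ_k i = max (f i) (min k (f (i - 1) + 1))` for `0 < i < r` and
`δ_k 0 = max (f 0) k`. Once `k` exceeds the width of `δ`, every row `i + 1 < r` of `δ_k` is
`f i + 1` and row `0` is `k`, so `δ_k` has `k + r - 1` more boxes than `δ`.
-/

lemma colHt_le {f : ℕ → ℕ} {i j : ℕ} (h : f i < j) : colHt f j ≤ i :=
  Nat.sInf_le h

lemma lt_colHt_iff {f : ℕ → ℕ} (hf : Antitone f) {i₀ i j : ℕ} (h : f i₀ < j) :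
    i < colHt f j ↔ j ≤ f i := by
  constructor
  · intro hi
    by_contra! hlt
    exact (colHt_le hlt).not_gt hi
  · intro hji
    by_contra! hle
    have hmem : f (colHt f j) < j := Nat.sInf_mem (s := {i | f i < j}) ⟨i₀, h⟩
    exact (hf hle).not_gt (hmem.trans_le hji)

section Staircase

variable {r : ℕ} {f : ℕ → ℕ}

theorem staircase_apply (hr : 0 < r) (hf : Antitone f) (hfr : f (r - 1) = 0) (k i : ℕ) :
    staircase r f k i =
      if i < r then max (f i) (min k (if i = 0 then k else f (i - 1) + 1)) else f i := by
  induction k generalizing i with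
  | zero => split_ifs <;> simp [staircase]
  | succ k ih =>
    simp only [staircase, addCol, ih]
    rcases k with _ | m
    · split_ifs <;> omega
    · have hlast : f (r - 1) < m + 1 := by omega
      have hcol := colHt_le hlast
      rcases i with _ | i
      · split_ifs <;> omega
      · have hrow := lt_colHt_iff hf hlast (i := i)
        simp only [Nat.add_sub_cancel]
        split_ifs <;> omega

theorem staircase_apply_zero (hr : 0 < r) (hf : Antitone f) (hfr : f (r - 1) = 0) (k : ℕ) :
    staircase r f k 0 = max (f 0) k := by
  simp [staircase_apply hr hf hfr, hr]

theorem staircase_apply_succ_of_width_lt (hr : 0 < r) (hf : Antitone f) (hfr : f (r - 1) = 0)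
    {k i : ℕ} (hk : f 0 < k) (hi : i + 1 < r) :
    staircase r f k (i + 1) = f i + 1 := by
  have h0 : f i ≤ f 0 := hf (Nat.zero_le i)
  have h1 : f (i + 1) ≤ f i := hf (Nat.le_succ i)
  rw [staircase_apply hr hf hfr, if_pos hi, if_neg i.succ_ne_zero, Nat.add_sub_cancel]
  omega

theorem sum_staircase_of_width_lt (hr : 0 < r) (hf : Antitone f) (hfr : f (r - 1) = 0)
    {k : ℕ} (hk : f 0 < k) :
    ∑ i ∈ Finset.range r, staircase r f k i = ∑ i ∈ Finset.range r, f i + (r - 1) + k := by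
  obtain ⟨m, rfl⟩ := Nat.exists_eq_add_one_of_ne_zero hr.ne'
  have hfm : f m = 0 := hfr
  rw [Finset.sum_range_succ', Finset.sum_range_succ, hfm, staircase_apply_zero hr hf hfr,
    max_eq_right hk.le,
    Finset.sum_congr rfl fun i hi => staircase_apply_succ_of_width_lt hr hf hfr hk
      (Nat.succ_lt_succ (Finset.mem_range.mp hi)),
    Finset.sum_add_distrib, Finset.sum_const, Finset.card_range, smul_eq_mul, mul_one,
    Nat.add_sub_cancel]
  ring

end Staircase

/-- For `δ` of height `< r` and width `< d - r + 1` (with `0 < r ≤ d`) and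
`K = d - r + 1`: `s_K = d`; the width of `δ_k` is `< d - r + 1` for `k < K`;
and the width of `δ_K` equals `d - r + 1`. -/
theorem stmt5 (d r : ℕ) (f : ℕ → ℕ) (hr : 0 < r) (hrd : r ≤ d)
    (hmono : ∀ i j, i ≤ j → f j ≤ f i)
    (hht : ∀ i, r - 1 ≤ i → f i = 0)
    (hwidth : f 0 < d - r + 1) :
    (∑ i ∈ Finset.range r, staircase r f (d - r + 1) i) -
        (∑ i ∈ Finset.range r, f i) = d ∧
      (∀ k, k < d - r + 1 → staircase r f k 0 < d - r + 1) ∧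
      staircase r f (d - r + 1) 0 = d - r + 1 := by
  have hf : Antitone f := hmono
  have hfr : f (r - 1) = 0 := hht (r - 1) le_rfl
  refine ⟨?_, fun k hk => ?_, ?_⟩
  · rw [sum_staircase_of_width_lt hr hf hfr hwidth]
    omega
  · rw [staircase_apply_zero hr hf hfr]
    exact max_lt hwidth hk
  · rw [staircase_apply_zero hr hf hfr]
    exact max_eq_right hwidth.le
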